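/- arXiv:2602.12934 — 6 statements merged into one kernel-verified Lean document; each statement's English description precedes it below -/
import Mathlib

section
/- If K is a zero-dimensional compact Hausdorff topological space, then γ*(C(K)) = 1, where C(K) is the Banach space of real-valued continuous functions on K with the supremum norm; that is, for every r > 1 there exists an additive subgroup of C(K) that is 2-separated and r-dense. -/
open Set Metric ENNReal

universe u

/-- A set `P` in a normed space is `r`-separated if `‖x - y‖ ≥ r`
for all distinct `x, y ∈ P`. -/
def IsRSeparated {X : Type u} [NormedAddCommGroup X] (r : ℝ) (P : Set X) : Prop :=
  ∀ x ∈ P, ∀ y ∈ P, x ≠ y → r ≤ ‖x - y‖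

/-- A set `P` in a normed space is `r`-dense if every point of the space is within
distance `r` of some point of `P`. -/
def IsRDense {X : Type u} [NormedAddCommGroup X] (r : ℝ) (P : Set X) : Prop :=
  ∀ x : X, ∃ p ∈ P, ‖x - p‖ ≤ r

/-- The simultaneous packing and covering constant `γ(X)`: the infimum of all `r > 0`
for which `X` contains a set that is simultaneously `2`-separated and `r`-dense. -/
noncomputable def packingCovering (X : Type u) [NormedAddCommGroup X] : ℝ :=
  sInf {r : ℝ | 0 < r ∧ ∃ P : Set X, IsRSeparated 2 P ∧ IsRDense r P}

/-- The lattice simultaneous packing and covering constant `γ*(X)`: the infimum of all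
`r > 0` for which `X` contains an additive subgroup that is simultaneously `2`-separated
and `r`-dense. -/
noncomputable def packingCoveringStar (X : Type u) [NormedAddCommGroup X] : ℝ :=
  sInf {r : ℝ | 0 < r ∧ ∃ D : AddSubgroup X,
    IsRSeparated 2 (D : Set X) ∧ IsRDense r (D : Set X)}

/-- The Kottman constant `K(X)`: the supremum of all `r > 0` such that the closed unit
ball of `X` contains an infinite `r`-separated set. -/
noncomputable def kottman (X : Type u) [NormedAddCommGroup X] : ℝ :=
  sSup {r : ℝ | 0 < r ∧ ∃ P : Set X,
    P ⊆ closedBall (0 : X) 1 ∧ P.Infinite ∧ IsRSeparated r P}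

/-- The `κ`-Kottman constant `K(X; κ)`: the supremum of all `r > 0` such that the closed
unit ball of `X` contains an `r`-separated set of cardinality `κ`. -/
noncomputable def kottmanCard (X : Type u) [NormedAddCommGroup X] (κ : Cardinal.{u}) : ℝ :=
  sSup {r : ℝ | 0 < r ∧ ∃ P : Set X,
    P ⊆ closedBall (0 : X) 1 ∧ Cardinal.mk ↥P = κ ∧ IsRSeparated r P}

/-- The density character of a topological space: the smallest cardinality of a dense
subset. -/
noncomputable def densChar (X : Type u) [TopologicalSpace X] : Cardinal.{u} :=
  sInf {c : Cardinal.{u} | ∃ s : Set X, Dense s ∧ Cardinal.mk ↥s = c}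

/-- The modulus of local uniform rotundity `δ_X(x₀, ε)` at a point `x₀`. -/
noncomputable def lurModulus {X : Type u} [NormedAddCommGroup X] (x₀ : X) (ε : ℝ) : ℝ :=
  sInf {d : ℝ | ∃ y : X, ‖y‖ ≤ 1 ∧ ε ≤ ‖x₀ - y‖ ∧ d = 1 - ‖x₀ + y‖ / 2}

/-- `x₀` is a LUR (locally uniformly rotund) point of the unit ball of `X` if it lies on
the unit sphere and `δ_X(x₀, ε) > 0` for every `ε ∈ (0, 2]`. -/
def IsLURPoint {X : Type u} [NormedAddCommGroup X] (x₀ : X) : Prop :=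
  ‖x₀‖ = 1 ∧ ∀ ε : ℝ, 0 < ε → ε ≤ 2 → 0 < lurModulus x₀ ε

/-- The modulus of convexity `δ_X(ε)` of a normed space `X`. -/
noncomputable def convexityModulus (X : Type u) [NormedAddCommGroup X] (ε : ℝ) : ℝ :=
  sInf {d : ℝ | ∃ x y : X, ‖x‖ ≤ 1 ∧ ‖y‖ ≤ 1 ∧ ε ≤ ‖x - y‖ ∧ d = 1 - ‖x + y‖ / 2}

/-- The tangential modulus of convexity `φ_X(t)`, defined through Birkhoff-James
orthogonality: `φ_X(t) = inf {‖x + t v‖ - 1 : x, v ∈ S_X, x ⊥_BJ v}`. -/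
noncomputable def tangentialModulus (X : Type u) [NormedAddCommGroup X]
    [NormedSpace ℝ X] (t : ℝ) : ℝ :=
  sInf {d : ℝ | ∃ x v : X, ‖x‖ = 1 ∧ ‖v‖ = 1 ∧
    (∀ lam : ℝ, ‖x‖ ≤ ‖x + lam • v‖) ∧ d = ‖x + t • v‖ - 1}

/-- `φ : [0,∞) → [0,∞)` is a positive modulus: `φ(0) = 0`, `φ` is continuous at `0`,
`t ↦ φ(t)/t` is non-decreasing on `(0,∞)`, and `φ(t) > 0` for `t > 0`. -/
def IsPositiveModulus (φ : ℝ → ℝ) : Prop :=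
  φ 0 = 0 ∧ Filter.Tendsto φ (nhdsWithin 0 (Set.Ici 0)) (nhds 0) ∧
    (∀ s t : ℝ, 0 < s → s ≤ t → φ s / s ≤ φ t / t) ∧ ∀ t : ℝ, 0 < t → 0 < φ t

/-- The positive modulus `φ_p(t) = (1 + t^p)^(1/p) - 1` (real exponents). -/
noncomputable def phiP (p : ℝ) (t : ℝ) : ℝ := (1 + t ^ p) ^ (1 / p) - 1

/-- A normed space `X` is `(<κ)-octahedral` if for every `ε > 0` and every closed
subspace `Z` of `X` of density character `< κ` there is a unit vector `x` with
`‖z + λ x‖ ≥ (1 - ε)(‖z‖ + |λ|)` for all `z ∈ Z`, `λ ∈ ℝ`. -/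
def KappaOctahedral (κ : Cardinal.{u}) (X : Type u) [NormedAddCommGroup X]
    [NormedSpace ℝ X] : Prop :=
  ∀ ε : ℝ, 0 < ε → ∀ Z : Submodule ℝ X, IsClosed (Z : Set X) → densChar ↥Z < κ →
    ∃ x : X, ‖x‖ = 1 ∧ ∀ z ∈ Z, ∀ lam : ℝ, (1 - ε) * (‖z‖ + |lam|) ≤ ‖z + lam • x‖

/-- A normed space `X` is `(<κ)-φ-octahedral` if for every `ε > 0` and every closed
subspace `Z` of `X` of density character `< κ` there is a unit vector `x` with
`‖z + λ x‖ ≥ (1 - ε)(1 + φ(|λ|))` for all `z` in the unit sphere of `Z` and `λ ∈ ℝ`. -/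
def PhiOctahedral (κ : Cardinal.{u}) (φ : ℝ → ℝ) (X : Type u) [NormedAddCommGroup X]
    [NormedSpace ℝ X] : Prop :=
  ∀ ε : ℝ, 0 < ε → ∀ Z : Submodule ℝ X, IsClosed (Z : Set X) → densChar ↥Z < κ →
    ∃ x : X, ‖x‖ = 1 ∧ ∀ z ∈ Z, ‖z‖ = 1 →
      ∀ lam : ℝ, (1 - ε) * (1 + φ |lam|) ≤ ‖z + lam • x‖

/-!
Take for `D` the continuous functions with values in `2ℤ`. Two distinct ones differ by at
least `2` at some point. For density, locally constant functions are dense in `C(K, ℝ)` by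
Stone–Weierstrass, since clopen sets separate the points of `K`; rounding a locally constant
function to the nearest even integer keeps it locally constant and moves it by at most `1`.
-/

open AddSubgroup

lemma le_abs_sub_of_mem_zmultiples {a x y : ℝ} (hx : x ∈ zmultiples a) (hy : y ∈ zmultiples a)
    (hxy : x ≠ y) : a ≤ |x - y| := by
  obtain ⟨k, rfl⟩ := hx
  obtain ⟨m, rfl⟩ := hy
  have hkm : (1 : ℝ) ≤ |(k : ℝ) - m| := by
    exact_mod_cast Int.one_le_abs (sub_ne_zero.mpr fun h => hxy (by rw [h]))
  calc a ≤ |a| := le_abs_self a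
    _ ≤ |(k : ℝ) - m| * |a| := le_mul_of_one_le_left (abs_nonneg a) hkm
    _ = |k • a - m • a| := by rw [← abs_mul, zsmul_eq_mul, zsmul_eq_mul, sub_mul]

lemma abs_sub_round_div_mul_le {a : ℝ} (ha : 0 < a) (t : ℝ) :
    |t - round (t / a) * a| ≤ a / 2 := by
  calc |t - round (t / a) * a| = |t / a - round (t / a)| * a := by
        rw [← abs_of_pos ha, ← abs_mul, abs_of_pos ha, sub_mul, div_mul_cancel₀ t ha.ne']
    _ ≤ 1 / 2 * a := mul_le_mul_of_nonneg_right (abs_sub_round _) ha.le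
    _ = a / 2 := by ring

namespace ContinuousMap

variable {K : Type*} [TopologicalSpace K]

variable (K) in
def valuedIn (L : AddSubgroup ℝ) : AddSubgroup C(K, ℝ) :=
  (AddSubgroup.pi univ fun _ => L).comap coeFnAddMonoidHom

lemma mem_valuedIn {L : AddSubgroup ℝ} {f : C(K, ℝ)} : f ∈ valuedIn K L ↔ ∀ x, f x ∈ L := by
  simp [valuedIn, AddSubgroup.mem_pi]

variable [CompactSpace K]

lemma isRSeparated_valuedIn_zmultiples (a : ℝ) :
    IsRSeparated a (valuedIn K (zmultiples a) : Set C(K, ℝ)) := by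
  intro f hf g hg hfg
  obtain ⟨x, hx⟩ := DFunLike.ne_iff.mp hfg
  calc a ≤ |f x - g x| :=
        le_abs_sub_of_mem_zmultiples (mem_valuedIn.mp hf x) (mem_valuedIn.mp hg x) hx
    _ ≤ ‖f - g‖ := by simpa using (f - g).norm_coe_le_norm x

lemma exists_locallyConstant_norm_sub_lt [TotallySeparatedSpace K] (f : C(K, ℝ)) {ε : ℝ}
    (hε : 0 < ε) : ∃ h : LocallyConstant K ℝ, ‖f - h‖ < ε := by
  obtain ⟨⟨_, h, rfl⟩, hfh⟩ := exists_mem_subalgebra_near_continuousMap_of_separatesPoints _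
    (LocallyConstant.separatesPoints_range_toContinuousMapAlgHom ℝ) f ε hε
  exact ⟨h, by rwa [norm_sub_rev] at hfh⟩

lemma isRDense_valuedIn_zmultiples [TotallySeparatedSpace K] {a r : ℝ} (ha : 0 < a)
    (hr : a / 2 < r) : IsRDense r (valuedIn K (zmultiples a) : Set C(K, ℝ)) := by
  intro f
  obtain ⟨h, hfh⟩ := exists_locallyConstant_norm_sub_lt f (sub_pos.mpr hr)
  let g : LocallyConstant K ℝ := h.map fun t => round (t / a) * a
  refine ⟨g, mem_valuedIn.mpr fun x => ⟨round (h x / a), zsmul_eq_mul _ _⟩, ?_⟩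
  have hhg : ‖(h : C(K, ℝ)) - g‖ ≤ a / 2 :=
    (norm_le _ (by positivity)).mpr fun x => abs_sub_round_div_mul_le ha (h x)
  calc ‖f - g‖ ≤ ‖f - h‖ + ‖(h : C(K, ℝ)) - g‖ := norm_sub_le_norm_sub_add_norm_sub _ _ _
    _ ≤ r := by linarith

end ContinuousMap

/-- If `K` is a zero-dimensional (equivalently, totally disconnected)
compact Hausdorff space, then `γ*(C(K)) = 1`; that is, for every `r > 1` there exists an
additive subgroup of `C(K, ℝ)` that is `2`-separated and `r`-dense. -/
theorem gammaStar_continuousMap_eq_one (K : Type u) [TopologicalSpace K] [CompactSpace K]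
    [T2Space K] [TotallyDisconnectedSpace K] :
    ∀ r : ℝ, 1 < r → ∃ D : AddSubgroup (ContinuousMap K ℝ),
      IsRSeparated 2 (D : Set (ContinuousMap K ℝ)) ∧
        IsRDense r (D : Set (ContinuousMap K ℝ)) := by
  intro r hr
  exact ⟨ContinuousMap.valuedIn K (zmultiples 2),
    ContinuousMap.isRSeparated_valuedIn_zmultiples 2,
    ContinuousMap.isRDense_valuedIn_zmultiples two_pos (by linarith)⟩
end

section
/- If K is an extremally disconnected compact Hausdorff topological space, then C(K) (the space of real-valued continuous functions on K with the supremum norm) admits a lattice tiling by closed unit balls: there exists an additive subgroup D of C(K) that is 2-separated and such that the closed balls of radius 1 centered at the points of D cover C(K), i.e., D is 1-dense. -/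
open Set Metric ENNReal

universe u

/-!
A continuous function on an extremally disconnected compact space can be rounded continuously:
by Gleason's theorem such a space is projective, so `f : K → ℝ` lifts along the projection onto
the first coordinate of the compact set `{(t, p) : t ∈ range f, p ∈ 2ℤ, |t - p| ≤ 1}`, and the
second coordinate of the lift is a continuous `2ℤ`-valued function within distance `1` of `f`.
Continuous `2ℤ`-valued functions form a `2`-separated subgroup of `C(K)`.
-/

open AddSubgroup

universe v w

/-- `CompactT2.ExtremallyDisconnected.projective`, for spaces in arbitrary universes. -/
theorem ExtremallyDisconnected.exists_lift {K : Type u} {Y : Type v} {Z : Type w}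
    [TopologicalSpace K] [CompactSpace K] [T2Space K] [ExtremallyDisconnected K]
    [TopologicalSpace Y] [CompactSpace Y] [T2Space Y] [TopologicalSpace Z] [CompactSpace Z]
    [T2Space Z]
    {f : K → Z} {g : Y → Z} (hf : Continuous f) (hg : Continuous g) (hgs : g.Surjective) :
    ∃ h : K → Y, Continuous h ∧ g ∘ h = f := by
  have := extremallyDisconnected_of_homeo (Homeomorph.ulift (X := K)).symm
  obtain ⟨h, hh, hgh⟩ := CompactT2.ExtremallyDisconnected.projective (A := ULift.{max v w} K)
    (Y := ULift.{max u w} Y) (Z := ULift.{max u v} Z) (f := ULift.up ∘ f ∘ ULift.down)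
    (g := ULift.up ∘ g ∘ ULift.down) (by fun_prop) (by fun_prop)
    (ULift.up_surjective.comp (hgs.comp ULift.down_surjective))
  exact ⟨ULift.down ∘ h ∘ ULift.up, by fun_prop,
    funext fun x => congrArg ULift.down (congrFun hgh (ULift.up x))⟩

def AddSubgroup.continuousMaps (K : Type*) {E : Type*} [TopologicalSpace K] [TopologicalSpace E]
    [AddGroup E] [IsTopologicalAddGroup E] (H : AddSubgroup E) : AddSubgroup C(K, E) where
  carrier := {g | ∀ x, g x ∈ H}
  zero_mem' _ := H.zero_mem
  add_mem' hf hg x := H.add_mem (hf x) (hg x)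
  neg_mem' hf x := H.neg_mem (hf x)

theorem AddSubgroup.coe_continuousMaps {K E : Type*} [TopologicalSpace K] [TopologicalSpace E]
    [AddGroup E] [IsTopologicalAddGroup E] (H : AddSubgroup E) :
    (H.continuousMaps K : Set C(K, E)) = {g | ∀ x, g x ∈ H} :=
  rfl

section ContinuousMap

variable {K E : Type*} [TopologicalSpace K] [CompactSpace K] [NormedAddCommGroup E] {r : ℝ}
  {P : Set E}

theorem IsRSeparated.continuousMap (hP : IsRSeparated r P) :
    IsRSeparated r {g : C(K, E) | ∀ x, g x ∈ P} := by
  intro f hf g hg hfg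
  obtain ⟨x, hx⟩ := DFunLike.ne_iff.mp hfg
  exact (hP _ (hf x) _ (hg x) hx).trans ((f - g).norm_coe_le_norm x)

theorem IsRDense.continuousMap [T2Space K] [ExtremallyDisconnected K] [ProperSpace E]
    (hPc : IsClosed P) (hP : IsRDense r P) :
    IsRDense r {g : C(K, E) | ∀ x, g x ∈ P} := by
  intro f
  have hS : IsCompact (range f) := isCompact_range f.continuous
  let Y := {q : E × E | q.1 ∈ range f ∧ q.2 ∈ P ∧ ‖q.1 - q.2‖ ≤ r}
  have hY : IsCompact Y := by
    refine isCompact_of_isClosed_isBounded ?_ ?_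
    · exact (hS.isClosed.preimage continuous_fst).inter ((hPc.preimage continuous_snd).inter
        (isClosed_le (continuous_fst.sub continuous_snd).norm continuous_const))
    · refine (hS.isBounded.prod (hS.isBounded.cthickening (δ := r))).subset fun q hq =>
        ⟨hq.1, mem_cthickening_of_dist_le q.2 q.1 r _ hq.1 ?_⟩
      rw [dist_comm, dist_eq_norm]
      exact hq.2.2
  have := isCompact_iff_compactSpace.mp hS
  have := isCompact_iff_compactSpace.mp hY
  have hsurj : (fun q : Y => (⟨q.1.1, q.2.1⟩ : range f)).Surjective := by
    rintro ⟨_, x, rfl⟩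
    obtain ⟨p, hp, hfp⟩ := hP (f x)
    exact ⟨⟨(f x, p), mem_range_self x, hp, hfp⟩, rfl⟩
  obtain ⟨h, hh, hfh⟩ := ExtremallyDisconnected.exists_lift f.continuous.rangeFactorization
    ((continuous_fst.comp continuous_subtype_val).subtype_mk _) hsurj
  have hfst (x : K) : (h x).1.1 = f x := congrArg Subtype.val (congrFun hfh x)
  have hr : 0 ≤ r := (norm_nonneg _).trans (hP 0).choose_spec.2
  refine ⟨⟨fun x => (h x).1.2, by fun_prop⟩, fun x => (h x).2.2.1, ?_⟩
  refine (ContinuousMap.norm_le _ hr).mpr fun x => ?_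
  rw [ContinuousMap.sub_apply, ← hfst x]
  exact (h x).2.2.2

end ContinuousMap

theorem isRSeparated_zmultiples (a : ℝ) : IsRSeparated |a| (zmultiples a : Set ℝ) := by
  rintro _ ⟨m, rfl⟩ _ ⟨n, rfl⟩ hne
  have hmn : (1 : ℝ) ≤ |(m : ℝ) - n| := by
    exact_mod_cast Int.one_le_abs (sub_ne_zero.mpr fun h => hne (by rw [h]))
  change |a| ≤ ‖m • a - n • a‖
  rw [zsmul_eq_mul, zsmul_eq_mul, ← sub_mul, Real.norm_eq_abs, abs_mul]
  exact le_mul_of_one_le_left (abs_nonneg a) hmn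

theorem isRDense_zmultiples {a : ℝ} (ha : a ≠ 0) :
    IsRDense (|a| / 2) (zmultiples a : Set ℝ) := by
  intro t
  refine ⟨round (t / a) • a, zsmul_mem_zmultiples a _, ?_⟩
  calc ‖t - round (t / a) • a‖ = |t / a - round (t / a)| * |a| := by
        rw [Real.norm_eq_abs, ← abs_mul, sub_mul, div_mul_cancel₀ t ha, zsmul_eq_mul]
    _ ≤ 1 / 2 * |a| := by gcongr; exact abs_sub_round _
    _ = |a| / 2 := by ring

/-- If `K` is an extremally disconnected compact Hausdorff space, then
`C(K, ℝ)` admits a lattice tiling by closed unit balls: there is an additive subgroup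
which is `2`-separated and `1`-dense. -/
theorem exists_lattice_tiling_continuousMap (K : Type u) [TopologicalSpace K]
    [CompactSpace K] [T2Space K] [ExtremallyDisconnected K] :
    ∃ D : AddSubgroup (ContinuousMap K ℝ),
      IsRSeparated 2 (D : Set (ContinuousMap K ℝ)) ∧
        IsRDense 1 (D : Set (ContinuousMap K ℝ)) := by
  refine ⟨(zmultiples (2 : ℝ)).continuousMaps K, ?_, ?_⟩ <;> rw [coe_continuousMaps]
  · simpa using (isRSeparated_zmultiples (2 : ℝ)).continuousMap (K := K)
  · simpa using (isRDense_zmultiples two_ne_zero).continuousMap (K := K)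
      (zmultiples (2 : ℝ)).isClosed_of_discrete
end

section
/- Let κ be an infinite cardinal, let (X_α)_{α<κ} be a family of non-zero normed spaces, and let p ∈ [1,∞). Then the ℓ_p-sum (⊕_{α<κ} X_α)_{ℓ_p} is (<κ)-φ_p-octahedral. In particular, ℓ_p(κ) is (<κ)-φ_p-octahedral. -/
open Set Metric ENNReal

universe u

/-! Elements of an `ℓ_p`-sum have countable support, so a nonzero subspace `Z` with a dense
subset of cardinality `dens Z < κ` is carried by at most `ℵ₀ · dens Z = dens Z < κ` coordinates,
and some coordinate `i` vanishes on all of `Z`. A unit vector `x` supported at `i` is disjoint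
from `Z`, hence `‖z + λ x‖ = (1 + |λ|^p)^{1/p} = 1 + φ_p(|λ|)` for every unit vector `z ∈ Z`. -/

section DensityCharacter

variable (X : Type u) [TopologicalSpace X]

theorem exists_dense_mk_eq_densChar : ∃ s : Set X, Dense s ∧ Cardinal.mk s = densChar X :=
  csInf_mem (s := {c | ∃ s : Set X, Dense s ∧ Cardinal.mk s = c}) ⟨_, univ, dense_univ, rfl⟩

theorem aleph0_le_densChar [T1Space X] [Infinite X] : Cardinal.aleph0 ≤ densChar X := by
  refine le_csInf ⟨_, univ, dense_univ, rfl⟩ ?_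
  rintro _ ⟨s, hs, rfl⟩
  have hs_inf : s.Infinite := fun hfin ↦ by
    have hs_univ := hs.closure_eq
    rw [hfin.isClosed.closure_eq] at hs_univ
    exact infinite_univ (hs_univ ▸ hfin)
  exact Cardinal.infinite_iff.mp hs_inf.to_subtype

end DensityCharacter

namespace lp

variable {ι : Type u} {E : ι → Type u} [∀ i, NormedAddCommGroup (E i)] {q : ℝ≥0∞}

theorem countable_dsupport (hq : 0 < q.toReal) (f : lp E q) : {i | f i ≠ 0}.Countable :=
  ((lp.memℓp f).summable hq).countable_support.mono fun _ hi ↦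
    (Real.rpow_pos_of_pos (norm_pos_iff.mpr hi) _).ne'

theorem exists_forall_apply_eq_zero (hq : 0 < q.toReal) {S : Set (lp E q)}
    (hS : Cardinal.aleph0 ≤ Cardinal.mk S) (hSι : Cardinal.mk S < Cardinal.mk ι) :
    ∃ i, ∀ f ∈ S, f i = 0 := by
  set A : Set ι := ⋃ f : S, {i | (f : lp E q) i ≠ 0}
  have hA : Cardinal.mk A < Cardinal.mk ι :=
    calc Cardinal.mk A
        ≤ Cardinal.mk S * ⨆ f : S, Cardinal.mk {i | (f : lp E q) i ≠ 0} :=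
          Cardinal.mk_iUnion_le _
      _ ≤ Cardinal.mk S * Cardinal.aleph0 := by
          gcongr
          exact ciSup_le' fun f ↦ Cardinal.mk_le_aleph0_iff.mpr
            (countable_dsupport hq (f : lp E q)).to_subtype
      _ = Cardinal.mk S := Cardinal.mul_aleph0_eq hS
      _ < Cardinal.mk ι := hSι
  obtain ⟨i, hi⟩ : ∃ i, i ∉ A := by
    by_contra! h
    rw [Set.eq_univ_of_forall h, Cardinal.mk_univ] at hA
    exact hA.false
  exact ⟨i, fun f hf ↦ by_contra fun hfi ↦ hi (Set.mem_iUnion.mpr ⟨⟨f, hf⟩, hfi⟩)⟩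

theorem norm_add_rpow_of_disjoint (hq : 0 < q.toReal) {f g : lp E q}
    (hfg : ∀ i, f i = 0 ∨ g i = 0) :
    ‖f + g‖ ^ q.toReal = ‖f‖ ^ q.toReal + ‖g‖ ^ q.toReal := by
  rw [norm_rpow_eq_tsum hq, norm_rpow_eq_tsum hq, norm_rpow_eq_tsum hq,
    ← ((lp.memℓp f).summable hq).tsum_add ((lp.memℓp g).summable hq)]
  congr 1 with i
  rcases hfg i with h | h <;> simp [h, Real.zero_rpow hq.ne']

variable [∀ i, NormedSpace ℝ (E i)]

theorem exists_forall_mem_apply_eq_zero [Fact (1 ≤ q)] (hq : 0 < q.toReal)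
    (Z : Submodule ℝ (lp E q)) (hZ : densChar Z < Cardinal.mk ι) :
    ∃ i, ∀ z ∈ Z, z i = 0 := by
  by_cases hZ_nontriv : Nontrivial Z
  · have : Infinite Z := PreconnectedSpace.infinite
    obtain ⟨S, hS_dense, hS_card⟩ := exists_dense_mk_eq_densChar Z
    have hT_card : Cardinal.mk (((↑) : Z → lp E q) '' S) = densChar Z :=
      (Cardinal.mk_image_eq Subtype.val_injective).trans hS_card
    obtain ⟨i, hi⟩ := exists_forall_apply_eq_zero hq
      (hT_card ▸ aleph0_le_densChar Z) (hT_card ▸ hZ)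
    have h_closed : IsClosed {f : lp E q | f i = 0} :=
      isClosed_eq (lipschitzWith_one_eval q i).continuous continuous_const
    refine ⟨i, fun z hz ↦ closure_minimal hi h_closed ?_⟩
    exact image_closure_subset_closure_image continuous_subtype_val
      ⟨⟨z, hz⟩, hS_dense.closure_eq ▸ mem_univ _, rfl⟩
  · rw [not_nontrivial_iff_subsingleton] at hZ_nontriv
    obtain ⟨i⟩ := Cardinal.mk_ne_zero_iff.mp (pos_of_gt hZ).ne'
    exact ⟨i, fun z hz ↦ congrArg (fun w : Z ↦ (w : lp E q) i) (Subsingleton.elim ⟨z, hz⟩ 0)⟩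

theorem norm_add_smul_single_eq_one_add_phiP [DecidableEq ι] (hq : 0 < q.toReal)
    {f : lp E q} {i : ι} (hfi : f i = 0) (hf : ‖f‖ = 1) {x : E i} (hx : ‖x‖ = 1) (c : ℝ) :
    ‖f + c • lp.single q i x‖ = 1 + phiP q.toReal |c| := by
  rw [← lp.single_smul]
  have h_disj : ∀ j, f j = 0 ∨ lp.single q i (c • x) j = 0 := fun j ↦ by
    by_cases hj : j = i
    · exact .inl (hj ▸ hfi)
    · exact .inr (lp.single_apply_ne q i _ hj)
  have h := norm_add_rpow_of_disjoint hq h_disj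
  rw [lp.norm_single (ENNReal.toReal_pos_iff.mp hq).1, norm_smul, hx, hf, mul_one, Real.one_rpow,
    Real.norm_eq_abs] at h
  rw [phiP, add_sub_cancel, ← h, one_div, Real.rpow_rpow_inv (lp.norm_nonneg' _) hq.ne']

end lp

theorem lpSum_phiP_octahedral_general {ι : Type u} (κ : Cardinal.{u})
    (hι : Cardinal.mk ι = κ)
    (E : ι → Type u) [∀ i, NormedAddCommGroup (E i)] [∀ i, NormedSpace ℝ (E i)]
    (hE : ∀ i, ∃ x : E i, x ≠ 0)
    (p : ℝ) [Fact (1 ≤ ENNReal.ofReal p)] :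
    PhiOctahedral κ (phiP p) ↥(lp E (ENNReal.ofReal p)) := by
  classical
  have hp : 0 < p := ENNReal.ofReal_pos.mp (zero_lt_one.trans_le Fact.out)
  have hq : 0 < (ENNReal.ofReal p).toReal := by rwa [ENNReal.toReal_ofReal hp.le]
  intro ε hε Z _ hZ
  obtain ⟨i, hZi⟩ := lp.exists_forall_mem_apply_eq_zero hq Z (hι ▸ hZ)
  obtain ⟨v, hv⟩ := hE i
  have : Nontrivial (E i) := nontrivial_of_ne v 0 hv
  obtain ⟨u, hu⟩ := exists_norm_eq (E i) zero_le_one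
  refine ⟨lp.single _ i u, by rw [lp.norm_single (ENNReal.ofReal_pos.mpr hp), hu],
    fun z hz hz1 lam ↦ ?_⟩
  have h_norm := lp.norm_add_smul_single_eq_one_add_phiP hq (hZi z hz) hz1 hu lam
  rw [ENNReal.toReal_ofReal hp.le] at h_norm
  rw [h_norm]
  exact mul_le_of_le_one_left (h_norm ▸ norm_nonneg _) (by linarith)

/-- Let `κ` be an infinite cardinal, `(X_α)_{α<κ}` a family of non-zero
normed spaces and `p ∈ [1, ∞)`. Then the `ℓ_p`-sum `(⊕_{α<κ} X_α)_{ℓ_p}` is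
`(<κ)-φ_p`-octahedral. (In particular, `ℓ_p(κ)` is `(<κ)-φ_p`-octahedral.) -/
theorem lpSum_phiP_octahedral {ι : Type u} (κ : Cardinal.{u})
    (hκ : Cardinal.aleph0 ≤ κ) (hι : Cardinal.mk ι = κ)
    (E : ι → Type u) [∀ i, NormedAddCommGroup (E i)] [∀ i, NormedSpace ℝ (E i)]
    (hE : ∀ i, ∃ x : E i, x ≠ 0)
    (p : ℝ) (hp : 1 ≤ p) [Fact (1 ≤ ENNReal.ofReal p)] :
    PhiOctahedral κ (phiP p) ↥(lp E (ENNReal.ofReal p)) :=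
  lpSum_phiP_octahedral_general κ hι E hE p
end

section
/- Let κ be an infinite cardinal, p ∈ [1,∞), and 1 ≤ r ≤ p. If X is a (<κ)-φ_p-octahedral normed space, then X ⊕_r Y is (<κ)-φ_p-octahedral for every normed space Y. -/
open Set Metric ENNReal

universe u

lemma minkowski_aux {q s u : ℝ} (hq : 1 ≤ q) (hs : 0 ≤ s) (hu0 : 0 ≤ u) (hu1 : u ≤ 1) :
    (1 + s) ^ (1/q) ≤ (u ^ q + s) ^ (1/q) + (1 - u) := by
  have hq0 : q ≠ 0 := by positivity
  have h := Real.Lp_add_le (Finset.univ : Finset (Fin 2)) ![u, s ^ (1/q)] ![1 - u, 0] hq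
  simp only [Fin.sum_univ_two, Matrix.cons_val_zero, Matrix.cons_val_one, Matrix.head_cons,
    add_zero] at h
  have e1 : |u + (1 - u)| = 1 := by rw [show u + (1-u) = 1 by ring, abs_one]
  have e2 : |s ^ (1/q)| ^ q = s := by
    rw [abs_of_nonneg (Real.rpow_nonneg hs _), ← Real.rpow_mul hs, one_div,
      inv_mul_cancel₀ hq0, Real.rpow_one]
  have e3 : (|1 - u| ^ q + |(0:ℝ)| ^ q) ^ (1/q) = 1 - u := by
    rw [abs_zero, Real.zero_rpow hq0, add_zero, abs_of_nonneg (by linarith),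
      ← Real.rpow_mul (by linarith), mul_one_div, div_self hq0, Real.rpow_one]
  have e4 : |u| ^ q = u ^ q := by rw [abs_of_nonneg hu0]
  rw [e1, e2, e3, e4, Real.one_rpow] at h
  exact h

lemma keyineq {p r a b s : ℝ} (hr : 1 ≤ r) (hrp : r ≤ p) (ha : 0 ≤ a) (hb : 0 ≤ b)
    (hs : 0 ≤ s) (hab : a ^ r + b ^ r = 1) :
    (1 + s) ^ (r/p) ≤ (a ^ p + s) ^ (r/p) + b ^ r := by
  have hr0 : (0:ℝ) < r := by linarith
  have hp0 : (0:ℝ) < p := by linarith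
  have hq : 1 ≤ p / r := (one_le_div hr0).mpr hrp
  have hbr : (0:ℝ) ≤ b ^ r := Real.rpow_nonneg hb _
  have har : (0:ℝ) ≤ a ^ r := Real.rpow_nonneg ha _
  have h := minkowski_aux (u := a ^ r) (s := s) hq hs har (by linarith)
  have e1 : (1:ℝ) / (p / r) = r / p := by rw [one_div_div]
  have e2 : (a ^ r) ^ (p / r) = a ^ p := by
    rw [← Real.rpow_mul ha, mul_div_cancel₀ _ hr0.ne']
  have e3 : 1 - a ^ r = b ^ r := by linarith
  rw [e1, e2, e3] at h
  exact h

open Metric in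
lemma densChar_map_closure_le {W X : Type u} [NormedAddCommGroup W] [NormedSpace ℝ W]
    [NormedAddCommGroup X] [NormedSpace ℝ X] (f : W →L[ℝ] X) (Z : Submodule ℝ W) :
    densChar ↥((Z.map (f : W →ₗ[ℝ] X)).topologicalClosure) ≤ densChar ↥Z := by
  set M := (Z.map (f : W →ₗ[ℝ] X)).topologicalClosure with hM
  have hne : {c : Cardinal | ∃ s : Set ↥Z, Dense s ∧ Cardinal.mk ↥s = c}.Nonempty :=
    ⟨_, Set.univ, dense_univ, rfl⟩
  obtain ⟨S, hS, hSc⟩ := csInf_mem hne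
  have hmem : ∀ z : ↥Z, f ↑z ∈ M := fun z =>
    Submodule.le_topologicalClosure _ (Submodule.mem_map_of_mem z.2)
  set g : ↥Z → ↥M := fun z => ⟨f ↑z, hmem z⟩ with hg
  have hgc : Continuous g := Continuous.subtype_mk (f.continuous.comp continuous_subtype_val) _
  have hdr : DenseRange g := by
    rw [Metric.denseRange_iff]
    intro w δ hδ
    have hw : (↑w : X) ∈ closure (Z.map (f : W →ₗ[ℝ] X) : Set X) := by
      rw [← Submodule.topologicalClosure_coe]
      exact w.2
    rw [Metric.mem_closure_iff] at hw
    obtain ⟨v, hv, hvd⟩ := hw δ hδ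
    obtain ⟨z, hz, hzv⟩ := Submodule.mem_map.mp hv
    refine ⟨⟨z, hz⟩, ?_⟩
    rw [Subtype.dist_eq]
    show dist (↑w : X) (f ↑(⟨z, hz⟩ : ↥Z)) < δ
    rw [show f z = v from hzv]
    exact hvd
  have hdense : Dense (g '' S) := hdr.dense_image hgc hS
  calc densChar ↥M ≤ Cardinal.mk ↥(g '' S) :=
        csInf_le (OrderBot.bddBelow _) ⟨g '' S, hdense, rfl⟩
    _ ≤ Cardinal.mk ↥S := Cardinal.mk_image_le
    _ = densChar ↥Z := hSc

/-- If `X` is a `(<κ)-φ_p`-octahedral normed space and `1 ≤ r ≤ p`,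
then `X ⊕_r Y` is `(<κ)-φ_p`-octahedral for every normed space `Y`. -/
theorem prodLr_phiP_octahedral {X Y : Type u} [NormedAddCommGroup X] [NormedSpace ℝ X]
    [NormedAddCommGroup Y] [NormedSpace ℝ Y]
    (κ : Cardinal.{u}) (hκ : Cardinal.aleph0 ≤ κ)
    (p r : ℝ) (hr : 1 ≤ r) (hrp : r ≤ p) [Fact (1 ≤ ENNReal.ofReal r)]
    (hX : PhiOctahedral κ (phiP p) X) :
    PhiOctahedral κ (phiP p) (WithLp (ENNReal.ofReal r) (X × Y)) := by
  intro ε hε Z hZc hZd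
  have hr0 : (0:ℝ) < r := by linarith
  have hp0 : (0:ℝ) < p := by linarith
  have htr : (ENNReal.ofReal r).toReal = r := ENNReal.toReal_ofReal hr0.le
  have htr' : 0 < (ENNReal.ofReal r).toReal := by rw [htr]; exact hr0
  set ε' : ℝ := min ε (1/2) with hε'def
  have hε'0 : 0 < ε' := lt_min hε (by norm_num)
  have hε'h : ε' ≤ 1/2 := min_le_right _ _
  have hε'ε : ε' ≤ ε := min_le_left _ _
  have h1ε' : (0:ℝ) ≤ 1 - ε' := by linarith
  set f : WithLp (ENNReal.ofReal r) (X × Y) →L[ℝ] X :=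
    (ContinuousLinearMap.fst ℝ X Y).comp
      (WithLp.prodContinuousLinearEquiv (ENNReal.ofReal r) ℝ X Y :
        WithLp (ENNReal.ofReal r) (X × Y) →L[ℝ] X × Y) with hfdef
  set M := (Z.map (f : WithLp (ENNReal.ofReal r) (X × Y) →ₗ[ℝ] X)).topologicalClosure with hMdef
  have hMc : IsClosed (M : Set X) := Submodule.isClosed_topologicalClosure _
  have hMd : densChar ↥M < κ := lt_of_le_of_lt (densChar_map_closure_le f Z) hZd
  obtain ⟨x, hx1, hx⟩ := hX ε' hε'0 M hMc hMd
  have key1 : ∀ zx : X, zx ∈ M → ∀ l : ℝ,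
      (1 - ε') * ((‖zx‖ ^ p + |l| ^ p) ^ (1/p)) ≤ ‖zx + l • x‖ := by
    intro zx hzx l
    rcases eq_or_lt_of_le (norm_nonneg zx) with h0 | h0
    · have hzx0 : zx = 0 := norm_eq_zero.mp h0.symm
      have e1 : (‖zx‖ ^ p + |l| ^ p) ^ (1/p) = |l| := by
        rw [hzx0, norm_zero, Real.zero_rpow hp0.ne', zero_add,
          ← Real.rpow_mul (abs_nonneg l), mul_one_div, div_self hp0.ne', Real.rpow_one]
      rw [e1, hzx0, zero_add, norm_smul, Real.norm_eq_abs, hx1, mul_one]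
      nlinarith [abs_nonneg l]
    · set a := ‖zx‖ with hadef
      have hap : (0:ℝ) < a ^ p := Real.rpow_pos_of_pos h0 p
      have hmem : a⁻¹ • zx ∈ M := M.smul_mem _ hzx
      have hnrm : ‖a⁻¹ • zx‖ = 1 := by
        rw [norm_smul, Real.norm_eq_abs, abs_of_pos (inv_pos.mpr h0), ← hadef,
          inv_mul_cancel₀ h0.ne']
      have H := hx (a⁻¹ • zx) hmem hnrm (a⁻¹ * l)
      have hRHS : a⁻¹ • zx + (a⁻¹ * l) • x = a⁻¹ • (zx + l • x) := by
        rw [smul_add, mul_smul]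
      rw [hRHS, norm_smul, Real.norm_eq_abs, abs_of_pos (inv_pos.mpr h0)] at H
      have H2 := mul_le_mul_of_nonneg_left H h0.le
      rw [← mul_assoc a a⁻¹, mul_inv_cancel₀ h0.ne', one_mul] at H2
      refine le_trans (le_of_eq ?_) H2
      have hphi : 1 + phiP p |a⁻¹ * l| = (1 + (a⁻¹ * |l|) ^ p) ^ (1/p) := by
        unfold phiP
        rw [abs_mul, abs_of_pos (inv_pos.mpr h0)]
        ring
      rw [hphi]
      have e2 : (a⁻¹ * |l|) ^ p = (a ^ p)⁻¹ * |l| ^ p := by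
        rw [Real.mul_rpow (inv_nonneg.mpr h0.le) (abs_nonneg l), Real.inv_rpow h0.le]
      have e3 : a = (a ^ p) ^ (1/p) := by
        rw [← Real.rpow_mul h0.le, mul_one_div, div_self hp0.ne', Real.rpow_one]
      calc (1 - ε') * ((a ^ p + |l| ^ p) ^ (1/p))
          = (1 - ε') * ((a ^ p * (1 + (a ^ p)⁻¹ * |l| ^ p)) ^ (1/p)) := by
            congr 2
            field_simp
        _ = a * ((1 - ε') * (1 + (a⁻¹ * |l|) ^ p) ^ (1/p)) := by
            rw [e2, Real.mul_rpow hap.le (by positivity)]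
            rw [show (a ^ p) ^ (1/p) = a from e3.symm]
            ring
  set w : WithLp (ENNReal.ofReal r) (X × Y) :=
    (WithLp.equiv (ENNReal.ofReal r) (X × Y)).symm (x, (0:Y)) with hwdef
  have hwfst : w.fst = x := rfl
  have hwsnd : w.snd = (0:Y) := rfl
  refine ⟨w, ?_, ?_⟩
  · rw [WithLp.prod_norm_eq_add htr' w, htr, hwfst, hwsnd, hx1, norm_zero,
      Real.one_rpow, Real.zero_rpow hr0.ne', add_zero, Real.one_rpow]
  · intro z hz hz1 lam
    have hfst : (z + lam • w).fst = z.fst + lam • x := by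
      rw [WithLp.add_fst, WithLp.smul_fst, hwfst]
    have hsnd : (z + lam • w).snd = z.snd := by
      rw [WithLp.add_snd, WithLp.smul_snd, hwsnd, smul_zero, add_zero]
    set a := ‖z.fst‖ with hadef
    set b := ‖z.snd‖ with hbdef
    set s := |lam| ^ p with hsdef
    have ha : (0:ℝ) ≤ a := norm_nonneg _
    have hb : (0:ℝ) ≤ b := norm_nonneg _
    have hs : (0:ℝ) ≤ s := Real.rpow_nonneg (abs_nonneg _) _
    have hab : a ^ r + b ^ r = 1 := by
      have h := WithLp.prod_norm_eq_add htr' z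
      rw [htr, hz1] at h
      have hTnn : (0:ℝ) ≤ a ^ r + b ^ r := by positivity
      calc a ^ r + b ^ r = ((a ^ r + b ^ r) ^ (1/r)) ^ r := by
            rw [← Real.rpow_mul hTnn, one_div, inv_mul_cancel₀ hr0.ne', Real.rpow_one]
        _ = (1:ℝ) ^ r := by rw [← h]
        _ = 1 := Real.one_rpow r
    have hzfM : z.fst ∈ M := Submodule.le_topologicalClosure _ ⟨z, hz, rfl⟩
    have hA := key1 z.fst hzfM lam
    set A := ‖z.fst + lam • x‖ with hAdef
    have hA0 : (0:ℝ) ≤ A := norm_nonneg _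
    have hnorm : ‖z + lam • w‖ = (A ^ r + b ^ r) ^ (1/r) := by
      rw [WithLp.prod_norm_eq_add htr' (z + lam • w), htr, hfst, hsnd]
    have hphi : 1 + phiP p |lam| = (1 + s) ^ (1/p) := by unfold phiP; rw [hsdef]; ring
    have h1s : (0:ℝ) ≤ 1 + s := by linarith
    have hphinn : (0:ℝ) ≤ (1 + s) ^ (1/p) := Real.rpow_nonneg h1s _
    have hsuff : (1 - ε') * (1 + s) ^ (1/p) ≤ ‖z + lam • w‖ := by
      rw [hnorm]
      have hcnn : (0:ℝ) ≤ (1 - ε') * (1 + s) ^ (1/p) := mul_nonneg h1ε' hphinn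
      have hstep : ((1 - ε') * (1 + s) ^ (1/p)) ^ r ≤ A ^ r + b ^ r := by
        have hmul : ∀ t : ℝ, 0 ≤ t → ((1 - ε') * (1 + t) ^ (1/p)) ^ r
            = (1 - ε') ^ r * (1 + t) ^ (r/p) := by
          intro t ht
          rw [Real.mul_rpow h1ε' (Real.rpow_nonneg (by linarith) _),
            ← Real.rpow_mul (by linarith : (0:ℝ) ≤ 1 + t), one_div_mul_eq_div]
        rw [hmul s hs]
        have hkey := keyineq hr hrp ha hb hs hab
        have h1e1 : (1 - ε') ^ r ≤ 1 := Real.rpow_le_one h1ε' (by linarith) hr0.le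
        have hernn : (0:ℝ) ≤ (1 - ε') ^ r := Real.rpow_nonneg h1ε' r
        have hapsnn : (0:ℝ) ≤ a ^ p + s := by positivity
        have hArge : (1 - ε') ^ r * (a ^ p + s) ^ (r/p) ≤ A ^ r := by
          have h2 := Real.rpow_le_rpow
            (mul_nonneg h1ε' (Real.rpow_nonneg hapsnn _)) hA hr0.le
          calc (1 - ε') ^ r * (a ^ p + s) ^ (r/p)
              = ((1 - ε') * ((a ^ p + s) ^ (1/p))) ^ r := by
                rw [Real.mul_rpow h1ε' (Real.rpow_nonneg hapsnn _),
                  ← Real.rpow_mul hapsnn, one_div_mul_eq_div]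
            _ ≤ A ^ r := h2
        have hbr : (1 - ε') ^ r * b ^ r ≤ b ^ r :=
          mul_le_of_le_one_left (Real.rpow_nonneg hb r) h1e1
        calc (1 - ε') ^ r * (1 + s) ^ (r/p)
            ≤ (1 - ε') ^ r * ((a ^ p + s) ^ (r/p) + b ^ r) :=
              mul_le_mul_of_nonneg_left hkey hernn
          _ = (1 - ε') ^ r * (a ^ p + s) ^ (r/p) + (1 - ε') ^ r * b ^ r := by ring
          _ ≤ A ^ r + b ^ r := add_le_add hArge hbr
      have := Real.rpow_le_rpow (by positivity) hstep (by positivity : (0:ℝ) ≤ 1/r)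
      rwa [← Real.rpow_mul hcnn, mul_one_div, div_self hr0.ne', Real.rpow_one] at this
    rw [hphi]
    refine le_trans ?_ hsuff
    exact mul_le_mul_of_nonneg_right (by linarith) hphinn
end

section
/- For every finite-dimensional normed space X one has γ(X) < 2; that is, there exist r < 2 and a subset of X that is simultaneously 2-separated and r-dense. -/
open Set Metric ENNReal

universe u

/-!
The `ℤ`-span `Λ` of a basis is a discrete subgroup, hence `ε`-separated for some `ε > 0`.
By Zorn's lemma there is a maximal `Λ`-invariant `ε`-separated set `M ⊇ Λ`; maximality leaves
no point `x` at distance `≥ ε` from `M`, since the whole orbit `x + Λ` could be added.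
The function `x ↦ dist(x, M)` is continuous and `Λ`-periodic, so its range is compact and its
maximum `s` is `< ε`: `M` is `s'`-dense for any `s < s' < ε`. Rescaling by `2 / ε` finishes.
-/

open scoped Pointwise

section Separation

variable {X : Type u} [NormedAddCommGroup X]

lemma IsRDense.mono {r s : ℝ} {P : Set X} (h : IsRDense r P) (hrs : r ≤ s) : IsRDense s P :=
  fun x => (h x).imp fun _ ⟨hp, hxp⟩ => ⟨hp, hxp.trans hrs⟩

lemma isRSeparated_union {r : ℝ} {A B : Set X} (hA : IsRSeparated r A) (hB : IsRSeparated r B)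
    (hAB : ∀ a ∈ A, ∀ b ∈ B, r ≤ ‖a - b‖) : IsRSeparated r (A ∪ B) := by
  rintro x (hx | hx) y (hy | hy) hxy
  · exact hA x hx y hy hxy
  · exact hAB x hx y hy
  · rw [← norm_neg, neg_sub]
    exact hAB y hy x hx
  · exact hB x hx y hy hxy

lemma IsRSeparated.image_add_left {r : ℝ} {P : Set X} (h : IsRSeparated r P) (x : X) :
    IsRSeparated r ((x + ·) '' P) := by
  rintro _ ⟨p, hp, rfl⟩ _ ⟨q, hq, rfl⟩ hne
  rw [add_sub_add_left_eq_sub]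
  exact h p hp q hq fun hpq => hne (hpq ▸ rfl)

lemma isRSeparated_sUnion_of_isChain {r : ℝ} {c : Set (Set X)} (hc : IsChain (· ⊆ ·) c)
    (h : ∀ P ∈ c, IsRSeparated r P) : IsRSeparated r (⋃₀ c) := by
  rintro x ⟨P, hP, hxP⟩ y ⟨Q, hQ, hyQ⟩ hxy
  rcases hc.total hP hQ with hPQ | hQP
  · exact h Q hQ x (hPQ hxP) y hyQ hxy
  · exact h P hP x hxP y (hQP hyQ) hxy

lemma exists_pos_isRSeparated_of_discreteTopology (G : AddSubgroup X) [DiscreteTopology G] :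
    ∃ ε > 0, IsRSeparated ε (G : Set X) := by
  obtain ⟨ε, hε, hball⟩ :=
    exists_ball_inter_eq_singleton_of_mem_discrete DiscreteTopology.isDiscrete G.zero_mem
  refine ⟨ε, hε, fun x hx y hy hxy => not_lt.mp fun hlt => sub_ne_zero.mpr hxy ?_⟩
  have : x - y ∈ ball (0 : X) ε ∩ G := ⟨by simpa using hlt, G.sub_mem hx hy⟩
  simpa [hball] using this

end Separation

section Scaling

variable {𝕜 : Type*} [NormedField 𝕜] {X : Type u} [NormedAddCommGroup X] [NormedSpace 𝕜 X]
  {r : ℝ} {P : Set X}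

lemma IsRSeparated.smul (h : IsRSeparated r P) (c : 𝕜) : IsRSeparated (‖c‖ * r) (c • P) := by
  rintro _ ⟨x, hx, rfl⟩ _ ⟨y, hy, rfl⟩ hne
  rw [← smul_sub, norm_smul]
  exact mul_le_mul_of_nonneg_left (h x hx y hy fun hxy => hne (hxy ▸ rfl)) (norm_nonneg c)

lemma IsRDense.smul (h : IsRDense r P) {c : 𝕜} (hc : c ≠ 0) : IsRDense (‖c‖ * r) (c • P) := by
  intro x
  obtain ⟨p, hp, hxp⟩ := h (c⁻¹ • x)
  refine ⟨c • p, smul_mem_smul_set hp, ?_⟩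
  calc ‖x - c • p‖ = ‖c • (c⁻¹ • x - p)‖ := by rw [smul_sub, smul_inv_smul₀ hc]
    _ ≤ ‖c‖ * r := by rw [norm_smul]; exact mul_le_mul_of_nonneg_left hxp (norm_nonneg c)

end Scaling

section Invariant

variable {X : Type u} [NormedAddCommGroup X] {G : AddSubgroup X} {M : Set X} {r : ℝ}

lemma infDist_add_of_forall_add_mem (hMG : ∀ p ∈ M, ∀ g ∈ G, p + g ∈ M) (x : X) {g : X}
    (hg : g ∈ G) : infDist (x + g) M = infDist x M := by
  have himage : (· + g) '' M = M := by
    refine (image_subset_iff.mpr fun p hp => hMG p hp g hg).antisymm fun p hp => ?_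
    exact ⟨p + -g, hMG p hp (-g) (G.neg_mem hg), neg_add_cancel_right p g⟩
  conv_lhs => rw [← himage]
  exact infDist_image (isometry_add_right g)

lemma IsRSeparated.union_image_add_left (hM : IsRSeparated r M) (hG : IsRSeparated r (G : Set X))
    (hMG : ∀ p ∈ M, ∀ g ∈ G, p + g ∈ M) {x : X} (hx : ∀ p ∈ M, r ≤ ‖x - p‖) :
    IsRSeparated r (M ∪ (x + ·) '' G) := by
  refine isRSeparated_union hM (hG.image_add_left x) ?_
  rintro p hp _ ⟨g, hg, rfl⟩
  have hpg : p - g ∈ M := by simpa [sub_eq_add_neg] using hMG p hp (-g) (G.neg_mem hg)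
  calc r ≤ ‖x - (p - g)‖ := hx _ hpg
    _ = ‖p - (x + g)‖ := by rw [← norm_neg]; congr 1; abel

theorem exists_isRSeparated_forall_exists_norm_sub_lt (hr : 0 < r)
    (hG : IsRSeparated r (G : Set X)) :
    ∃ M : Set X, (G : Set X) ⊆ M ∧ (∀ p ∈ M, ∀ g ∈ G, p + g ∈ M) ∧ IsRSeparated r M ∧
      ∀ x, ∃ p ∈ M, ‖x - p‖ < r := by
  let S : Set (Set X) := {M | IsRSeparated r M ∧ ∀ p ∈ M, ∀ g ∈ G, p + g ∈ M}
  obtain ⟨M, hGM, hmax⟩ := zorn_subset_nonempty S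
    (fun c hcS hc _ => ⟨⋃₀ c,
      ⟨isRSeparated_sUnion_of_isChain hc fun P hP => (hcS hP).1,
        fun p ⟨P, hP, hpP⟩ g hg => ⟨P, hP, (hcS hP).2 p hpP g hg⟩⟩,
      fun _ => subset_sUnion_of_mem⟩)
    G ⟨hG, fun p hp g hg => G.add_mem hp hg⟩
  obtain ⟨hMsep, hMG⟩ := hmax.prop
  refine ⟨M, hGM, hMG, hMsep, fun x => ?_⟩
  by_contra! hx
  have hxM : x ∉ M := fun h => (hx x h).not_gt (by simpa using hr)
  have hext : M ∪ (x + ·) '' G ∈ S := by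
    refine ⟨hMsep.union_image_add_left hG hMG hx, ?_⟩
    rintro _ (hp | ⟨g', hg', rfl⟩) g hg
    · exact Or.inl (hMG _ hp g hg)
    · exact Or.inr ⟨g' + g, G.add_mem hg' hg, (add_assoc x g' g).symm⟩
  exact hxM ((hmax.eq_of_subset hext subset_union_left).symm ▸
    Or.inr ⟨0, G.zero_mem, add_zero x⟩)

end Invariant

theorem exists_lt_isRDense_of_forall_exists_norm_sub_lt {X : Type u} [NormedAddCommGroup X]
    [NormedSpace ℝ X] [FiniteDimensional ℝ X] (L : Submodule ℤ X) [DiscreteTopology L]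
    [IsZLattice ℝ L] {M : Set X} {r : ℝ} (hMne : M.Nonempty) (hML : ∀ p ∈ M, ∀ g ∈ L, p + g ∈ M)
    (hM : ∀ x, ∃ p ∈ M, ‖x - p‖ < r) : ∃ s < r, IsRDense s M := by
  have hcompact : IsCompact (range (infDist · M)) :=
    IsZLattice.isCompact_range_of_periodic L _ (continuous_infDist_pt M)
      fun x _ hg => infDist_add_of_forall_add_mem (G := L.toAddSubgroup) hML x hg
  obtain ⟨_, ⟨x₀, rfl⟩, hx₀⟩ := hcompact.exists_isGreatest (range_nonempty _)
  have hx₀r : infDist x₀ M < r := by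
    obtain ⟨p, hp, hxp⟩ := hM x₀
    exact (infDist_le_dist_of_mem hp).trans_lt (by rwa [dist_eq_norm])
  refine ⟨(infDist x₀ M + r) / 2, by linarith, fun x => ?_⟩
  have hx : infDist x M < (infDist x₀ M + r) / 2 := (hx₀ ⟨x, rfl⟩).trans_lt (by linarith)
  obtain ⟨p, hp, hxp⟩ := (infDist_lt_iff hMne).mp hx
  exact ⟨p, hp, (dist_eq_norm x p ▸ hxp).le⟩

lemma exists_isRSeparated_isRDense_lt_of_lt {X : Type u} [NormedAddCommGroup X]
    [NormedSpace ℝ X] {ε s : ℝ} (hε : 0 < ε) (hs : s < ε) {P : Set X} (hsep : IsRSeparated ε P)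
    (hdense : IsRDense s P) {δ : ℝ} (hδ : 0 < δ) :
    ∃ r < δ, ∃ Q : Set X, IsRSeparated δ Q ∧ IsRDense r Q := by
  have hc : 0 < δ / ε := div_pos hδ hε
  have hnorm : ‖δ / ε‖ = δ / ε := Real.norm_of_nonneg hc.le
  refine ⟨δ / ε * s, ?_, (δ / ε) • P, ?_, ?_⟩
  · calc δ / ε * s < δ / ε * ε := mul_lt_mul_of_pos_left hs hc
      _ = δ := div_mul_cancel₀ δ hε.ne'
  · simpa only [hnorm, div_mul_cancel₀ δ hε.ne'] using hsep.smul (δ / ε)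
  · simpa only [hnorm] using hdense.smul hc.ne'

theorem exists_isRSeparated_isRDense_lt (X : Type u) [NormedAddCommGroup X] [NormedSpace ℝ X]
    [FiniteDimensional ℝ X] {δ : ℝ} (hδ : 0 < δ) :
    ∃ r < δ, ∃ P : Set X, IsRSeparated δ P ∧ IsRDense r P := by
  let L := Submodule.span ℤ (range (Module.finBasis ℝ X))
  obtain ⟨ε, hε, hL⟩ := exists_pos_isRSeparated_of_discreteTopology L.toAddSubgroup
  obtain ⟨M, hLM, hML, hMsep, hMnear⟩ := exists_isRSeparated_forall_exists_norm_sub_lt hε hL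
  obtain ⟨s, hs, hMdense⟩ :=
    exists_lt_isRDense_of_forall_exists_norm_sub_lt L ⟨0, hLM L.zero_mem⟩ hML hMnear
  exact exists_isRSeparated_isRDense_lt_of_lt hε hs hMsep hMdense hδ

lemma packingCovering_le {X : Type u} [NormedAddCommGroup X] {r : ℝ} (hr : 0 < r) {P : Set X}
    (hsep : IsRSeparated 2 P) (hdense : IsRDense r P) : packingCovering X ≤ r :=
  csInf_le ⟨0, fun _ h => h.1.le⟩ ⟨hr, P, hsep, hdense⟩

/-- For every finite-dimensional normed space `X` one has `γ(X) < 2`;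
that is, there exist `r < 2` and a subset of `X` that is simultaneously `2`-separated
and `r`-dense. -/
theorem gamma_lt_two_of_finiteDimensional {X : Type u} [NormedAddCommGroup X]
    [NormedSpace ℝ X] [FiniteDimensional ℝ X] :
    packingCovering X < 2 ∧
      ∃ r : ℝ, r < 2 ∧ ∃ P : Set X, IsRSeparated 2 P ∧ IsRDense r P := by
  obtain ⟨r, hr, P, hsep, hdense⟩ := exists_isRSeparated_isRDense_lt X two_pos
  have hγ := packingCovering_le (lt_max_of_lt_right one_pos) hsep (hdense.mono (le_max_left r 1))
  exact ⟨hγ.trans_lt (max_lt hr one_lt_two), r, hr, P, hsep, hdense⟩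
end

section
/- For every normed space X of dimension at least 2, the tangential modulus of convexity φ_X satisfies: (a) φ_X is 1-Lipschitz and φ_X(0) = 0; (b) φ_X(λt) ≤ λ·φ_X(t) for all λ ∈ (0,1) and t ∈ [0,∞) (in particular φ_X is non-decreasing); (c) δ_X(t/(1 + φ_X(t))) ≤ φ_X(t)/(1 + φ_X(t)) for all t ∈ [0,2); (d) if t ∈ [0,2) and t/2 − 2δ_X(t) ≥ 0, then φ_X(t/2 − 2δ_X(t)) ≤ δ_X(t); (e) φ_X is positive on (0,∞) if and only if δ_X is positive on (0,2). -/
open Set Metric ENNReal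

universe u

/-!
A value of `φ_X(t)` is witnessed by unit vectors `x ⊥_BJ v`, e.g. `v` in the kernel of a norming
functional of `x`, and a value of `δ_X(t)` by a pair `a, b` of the unit ball. Each estimate is
proved for a single witness and passes to the infimum because the bound depends continuously on
the value of the witness.

(a) and (b) are the triangle inequality along the line `s ↦ x + s v`. For (c), the pair
`x/(1+d), (x+tv)/(1+d)` with `d = ‖x+tv‖ - 1` gives `δ_X(t/(1+d)) ≤ d/(1+d)`, and Goebel's
estimate `δ_X(e) ≤ δ_X(e') + (e-e')/(2-e)` moves the argument from `t/(1+d)` to `t/(1+φ_X(t))`.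
For (d), write `a, b = m ± u` with `m = (a+b)/2`, let `F` norm `m`, choose the sign of `u` with
`F u ≥ 0` and split `u = (F u) x + w` with `x = m/‖m‖`, `F w = 0`. Then `x ⊥_BJ w`, and the line
through `x` in direction `w` passes through `(m+u)/(‖m‖ + F u)`, of norm at most
`1/(‖m‖ + F u)`; convexity of the norm on this line gives `φ_X(‖u‖ - d) ≤ d` for `d = 1 - ‖m‖`.
Hence `φ_X(t/2 - δ_X(t)) ≤ δ_X(t)`, and (d) follows by monotonicity. (e) follows from (c) and (d).
-/

theorem le_at_csInf_of_forall_mem {α β : Type*} [ConditionallyCompleteLinearOrder α]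
    [TopologicalSpace α] [OrderTopology α] [TopologicalSpace β] [Preorder β]
    [OrderClosedTopology β] {S : Set α} (hne : S.Nonempty) (hbdd : BddBelow S) {f g : α → β}
    (hf : ContinuousAt f (sInf S)) (hg : ContinuousAt g (sInf S)) (h : ∀ d ∈ S, f d ≤ g d) :
    f (sInf S) ≤ g (sInf S) :=
  ContinuousWithinAt.closure_le (csInf_mem_closure hne hbdd) hf.continuousWithinAt
    hg.continuousWithinAt h

section BirkhoffJames

variable {X : Type u} [NormedAddCommGroup X] [NormedSpace ℝ X]

def BirkhoffJamesOrthogonal (x v : X) : Prop :=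
  ∀ lam : ℝ, ‖x‖ ≤ ‖x + lam • v‖

theorem BirkhoffJamesOrthogonal.of_dual {F : StrongDual ℝ X} (hF : ‖F‖ ≤ 1) {x v : X}
    (hx : F x = ‖x‖) (hv : F v = 0) : BirkhoffJamesOrthogonal x v := fun lam =>
  calc ‖x‖ = F (x + lam • v) := by simp [hx, hv]
    _ ≤ ‖F (x + lam • v)‖ := Real.le_norm_self _
    _ ≤ ‖x + lam • v‖ := by simpa using F.le_of_opNorm_le hF (x + lam • v)

theorem nontrivial_of_two_le_rank {K M : Type*} [Field K] [AddCommGroup M] [Module K M]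
    (hdim : 2 ≤ Module.rank K M) : Nontrivial M :=
  rank_pos_iff_nontrivial.1 (lt_of_lt_of_le (by norm_num) hdim)

theorem exists_ne_zero_apply_eq_zero {K M : Type*} [Field K] [AddCommGroup M] [Module K M]
    (hdim : 2 ≤ Module.rank K M) (f : M →ₗ[K] K) : ∃ v ≠ 0, f v = 0 := by
  by_contra! h
  have hinj : Function.Injective f :=
    (injective_iff_map_eq_zero f).2 fun v hv => by_contra fun hne => h v hne hv
  have := f.lift_rank_le_of_injective hinj
  rw [Module.rank_self, Cardinal.lift_one, Cardinal.lift_le_one_iff] at this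
  exact absurd (hdim.trans this) (by norm_num)

theorem exists_birkhoffJamesOrthogonal (hdim : 2 ≤ Module.rank ℝ X) :
    ∃ x v : X, ‖x‖ = 1 ∧ ‖v‖ = 1 ∧ BirkhoffJamesOrthogonal x v := by
  have := nontrivial_of_two_le_rank hdim
  obtain ⟨x, hx⟩ := exists_norm_eq X zero_le_one
  obtain ⟨F, hF, hFx⟩ := exists_dual_vector ℝ x (by rw [hx]; exact one_ne_zero)
  obtain ⟨v, hv0, hFv⟩ := exists_ne_zero_apply_eq_zero hdim (F : X →ₗ[ℝ] ℝ)
  refine ⟨x, ‖v‖⁻¹ • v, hx, norm_smul_inv_norm hv0, .of_dual hF.le hFx ?_⟩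
  simp_all

end BirkhoffJames

section TangentialModulus

variable {X : Type u} [NormedAddCommGroup X] [NormedSpace ℝ X]

def tangentialValues (X : Type u) [NormedAddCommGroup X] [NormedSpace ℝ X] (t : ℝ) : Set ℝ :=
  {d | ∃ x v : X, ‖x‖ = 1 ∧ ‖v‖ = 1 ∧ BirkhoffJamesOrthogonal x v ∧ d = ‖x + t • v‖ - 1}

theorem nonneg_of_mem_tangentialValues {t d : ℝ} (hd : d ∈ tangentialValues X t) : 0 ≤ d := by
  obtain ⟨x, v, hx, -, hxv, rfl⟩ := hd
  linarith [hxv t]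

theorem tangentialValues_nonempty (hdim : 2 ≤ Module.rank ℝ X) (t : ℝ) :
    (tangentialValues X t).Nonempty := by
  obtain ⟨x, v, hx, hv, hxv⟩ := exists_birkhoffJamesOrthogonal hdim
  exact ⟨_, x, v, hx, hv, hxv, rfl⟩

theorem tangentialModulus_nonneg (t : ℝ) : 0 ≤ tangentialModulus X t :=
  Real.sInf_nonneg fun _ => nonneg_of_mem_tangentialValues

theorem tangentialModulus_le {x v : X} (hx : ‖x‖ = 1) (hv : ‖v‖ = 1)
    (hxv : BirkhoffJamesOrthogonal x v) (t : ℝ) : tangentialModulus X t ≤ ‖x + t • v‖ - 1 :=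
  csInf_le ⟨0, fun _ => nonneg_of_mem_tangentialValues⟩ ⟨x, v, hx, hv, hxv, rfl⟩

theorem le_at_tangentialModulus (hdim : 2 ≤ Module.rank ℝ X) {t : ℝ} {f g : ℝ → ℝ}
    (hf : ContinuousAt f (tangentialModulus X t)) (hg : ContinuousAt g (tangentialModulus X t))
    (h : ∀ x v : X, ‖x‖ = 1 → ‖v‖ = 1 → BirkhoffJamesOrthogonal x v →
      f (‖x + t • v‖ - 1) ≤ g (‖x + t • v‖ - 1)) :
    f (tangentialModulus X t) ≤ g (tangentialModulus X t) := by
  refine le_at_csInf_of_forall_mem (tangentialValues_nonempty hdim t)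
    ⟨0, fun _ => nonneg_of_mem_tangentialValues⟩ hf hg ?_
  rintro _ ⟨x, v, hx, hv, hxv, rfl⟩
  exact h x v hx hv hxv

theorem tangentialModulus_zero : tangentialModulus X 0 = 0 :=
  le_antisymm (Real.sInf_nonpos (by rintro _ ⟨x, v, hx, -, -, rfl⟩; simp [hx]))
    (tangentialModulus_nonneg 0)

theorem tangentialModulus_le_add_abs_sub (hdim : 2 ≤ Module.rank ℝ X) (s t : ℝ) :
    tangentialModulus X s ≤ tangentialModulus X t + |s - t| := by
  suffices tangentialModulus X s - |s - t| ≤ tangentialModulus X t by linarith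
  refine le_at_tangentialModulus hdim (f := fun _ => _) continuousAt_const continuousAt_id
    fun x v hx hv hxv => ?_
  have hline : ‖x + s • v‖ ≤ ‖x + t • v‖ + |s - t| :=
    calc ‖x + s • v‖ = ‖(x + t • v) + (s - t) • v‖ := by congr 1; module
      _ ≤ ‖x + t • v‖ + |s - t| := by simpa [norm_smul, hv] using norm_add_le _ ((s - t) • v)
  change tangentialModulus X s - |s - t| ≤ ‖x + t • v‖ - 1
  linarith [tangentialModulus_le hx hv hxv s]

theorem lipschitzWith_tangentialModulus (hdim : 2 ≤ Module.rank ℝ X) :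
    LipschitzWith 1 (tangentialModulus X) :=
  .of_le_add fun s t => by
    simpa [Real.dist_eq] using tangentialModulus_le_add_abs_sub hdim s t

theorem tangentialModulus_le_abs (hdim : 2 ≤ Module.rank ℝ X) (s : ℝ) :
    tangentialModulus X s ≤ |s| := by
  simpa [tangentialModulus_zero] using tangentialModulus_le_add_abs_sub hdim s 0

theorem tangentialModulus_mul_le (hdim : 2 ≤ Module.rank ℝ X) {lam : ℝ} (h0 : 0 ≤ lam)
    (h1 : lam ≤ 1) (t : ℝ) :
    tangentialModulus X (lam * t) ≤ lam * tangentialModulus X t := by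
  refine le_at_tangentialModulus hdim (f := fun _ => _) (g := (lam * ·)) continuousAt_const
    (continuousAt_const.mul continuousAt_id) fun x v hx hv hxv => ?_
  have hconv : ‖x + (lam * t) • v‖ ≤ (1 - lam) + lam * ‖x + t • v‖ :=
    calc ‖x + (lam * t) • v‖ = ‖(1 - lam) • x + lam • (x + t • v)‖ := by congr 1; module
      _ ≤ (1 - lam) + lam * ‖x + t • v‖ := by
        simpa only [norm_smul_of_nonneg h0, norm_smul_of_nonneg (sub_nonneg.2 h1), hx, mul_one]
          using norm_add_le ((1 - lam) • x) (lam • (x + t • v))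
  change tangentialModulus X (lam * t) ≤ lam * (‖x + t • v‖ - 1)
  linarith [tangentialModulus_le hx hv hxv (lam * t)]

theorem monotoneOn_tangentialModulus (hdim : 2 ≤ Module.rank ℝ X) :
    MonotoneOn (tangentialModulus X) (Ici 0) := by
  intro s hs t ht hst
  rcases (show (0 : ℝ) ≤ t from ht).eq_or_lt with rfl | ht
  · rw [le_antisymm hst hs]
  have hlam : s / t ≤ 1 := div_le_one_of_le₀ hst ht.le
  calc tangentialModulus X s = tangentialModulus X (s / t * t) := by rw [div_mul_cancel₀ _ ht.ne']
    _ ≤ s / t * tangentialModulus X t :=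
      tangentialModulus_mul_le hdim (div_nonneg hs ht.le) hlam t
    _ ≤ tangentialModulus X t := mul_le_of_le_one_left (tangentialModulus_nonneg t) hlam

end TangentialModulus

section ConvexityModulus

variable {X : Type u} [NormedAddCommGroup X]

def convexityValues (X : Type u) [NormedAddCommGroup X] (ε : ℝ) : Set ℝ :=
  {d | ∃ x y : X, ‖x‖ ≤ 1 ∧ ‖y‖ ≤ 1 ∧ ε ≤ ‖x - y‖ ∧ d = 1 - ‖x + y‖ / 2}

theorem nonneg_of_mem_convexityValues {ε d : ℝ} (hd : d ∈ convexityValues X ε) : 0 ≤ d := by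
  obtain ⟨x, y, hx, hy, -, rfl⟩ := hd
  linarith [norm_add_le x y]

theorem convexityModulus_nonneg (ε : ℝ) : 0 ≤ convexityModulus X ε :=
  Real.sInf_nonneg fun _ => nonneg_of_mem_convexityValues

theorem convexityModulus_le {x y : X} (hx : ‖x‖ ≤ 1) (hy : ‖y‖ ≤ 1) {ε : ℝ}
    (hε : ε ≤ ‖x - y‖) : convexityModulus X ε ≤ 1 - ‖x + y‖ / 2 :=
  csInf_le ⟨0, fun _ => nonneg_of_mem_convexityValues⟩ ⟨x, y, hx, hy, hε, rfl⟩

variable [NormedSpace ℝ X] [Nontrivial X]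

theorem convexityValues_nonempty {ε : ℝ} (hε : ε ≤ 2) : (convexityValues X ε).Nonempty := by
  obtain ⟨x, hx⟩ := exists_norm_eq X zero_le_one
  refine ⟨_, x, -x, hx.le, by rw [norm_neg, hx], ?_, rfl⟩
  rw [sub_neg_eq_add, ← two_smul ℝ x, norm_smul, hx]
  simpa using hε

theorem le_at_convexityModulus {ε : ℝ} (hε : ε ≤ 2) {f g : ℝ → ℝ}
    (hf : ContinuousAt f (convexityModulus X ε)) (hg : ContinuousAt g (convexityModulus X ε))
    (h : ∀ x y : X, ‖x‖ ≤ 1 → ‖y‖ ≤ 1 → ε ≤ ‖x - y‖ →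
      f (1 - ‖x + y‖ / 2) ≤ g (1 - ‖x + y‖ / 2)) :
    f (convexityModulus X ε) ≤ g (convexityModulus X ε) := by
  refine le_at_csInf_of_forall_mem (convexityValues_nonempty hε)
    ⟨0, fun _ => nonneg_of_mem_convexityValues⟩ hf hg ?_
  rintro _ ⟨x, y, hx, hy, hxy, rfl⟩
  exact h x y hx hy hxy

theorem exists_norm_add_smul_eq (z : X) {c : ℝ} (hc : 0 ≤ c) :
    ∃ u : X, ‖u‖ = 1 ∧ ‖z + c • u‖ = ‖z‖ + c := by
  obtain ⟨u, hu, hzu⟩ : ∃ u : X, ‖u‖ = 1 ∧ SameRay ℝ z u := by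
    rcases eq_or_ne z 0 with rfl | hz
    · obtain ⟨u, hu⟩ := exists_norm_eq X zero_le_one
      exact ⟨u, hu, .zero_left u⟩
    · exact ⟨‖z‖⁻¹ • z, norm_smul_inv_norm hz,
        SameRay.sameRay_nonneg_smul_right z (inv_nonneg.2 (norm_nonneg z))⟩
  refine ⟨u, hu, ?_⟩
  rw [(hzu.nonneg_smul_right hc).norm_add, norm_smul_of_nonneg hc, hu, mul_one]

/-- Goebel's continuity estimate for the modulus of convexity, at a single pair `a, b`. -/
theorem convexityModulus_le_add_div {a b : X} (ha : ‖a‖ ≤ 1) (hb : ‖b‖ ≤ 1) {e : ℝ}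
    (hab : ‖a - b‖ ≤ e) (he : e < 2) :
    convexityModulus X e ≤ 1 - ‖a + b‖ / 2 + (e - ‖a - b‖) / (2 - e) := by
  set s := (e - ‖a - b‖) / (2 - e) with hs_def
  have hs : 0 ≤ s := div_nonneg (by linarith) (by linarith)
  have hes : ‖a - b‖ + 2 * s = (1 + s) * e := by
    rw [hs_def]; field_simp [(by linarith : (2 : ℝ) - e ≠ 0)]; ring
  obtain ⟨u, hu, hau⟩ := exists_norm_add_smul_eq (a - b) (by positivity : 0 ≤ 2 * s)
  have hsu : ‖s • u‖ = s := by rw [norm_smul_of_nonneg hs, hu, mul_one]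
  have hr : 0 ≤ (1 + s)⁻¹ := by positivity
  have hball : ∀ z : X, ‖z‖ ≤ 1 + s → ‖(1 + s)⁻¹ • z‖ ≤ 1 := fun z hz => by
    rw [norm_smul_of_nonneg hr, inv_mul_le_iff₀ (by positivity), mul_one]
    exact hz
  have key := convexityModulus_le (ε := e) (hball (a + s • u) (by linarith [norm_add_le a (s • u)]))
    (hball (b - s • u) (by linarith [norm_sub_le b (s • u)])) ?_
  · have hsum : (1 + s)⁻¹ • (a + s • u) + (1 + s)⁻¹ • (b - s • u) = (1 + s)⁻¹ • (a + b) := by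
      module
    rw [hsum, norm_smul_of_nonneg hr] at key
    have hab2 : ‖a + b‖ ≤ 2 := by linarith [norm_add_le a b]
    refine key.trans ?_
    rw [← sub_nonneg]
    have : (1 + s)⁻¹ * (1 + s) = 1 := inv_mul_cancel₀ (by positivity)
    nlinarith [norm_nonneg (a + b), mul_nonneg hr hs]
  · have hdiff : (1 + s)⁻¹ • (a + s • u) - (1 + s)⁻¹ • (b - s • u)
        = (1 + s)⁻¹ • ((a - b) + (2 * s) • u) := by module
    rw [hdiff, norm_smul_of_nonneg hr, hau, hes, inv_mul_cancel_left₀ (by positivity : 1 + s ≠ 0)]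

end ConvexityModulus

section Estimates

variable {X : Type u} [NormedAddCommGroup X] [NormedSpace ℝ X]

theorem convexityModulus_le_of_birkhoffJamesOrthogonal [Nontrivial X] {x v : X} (hx : ‖x‖ = 1)
    (hv : ‖v‖ = 1) (hxv : BirkhoffJamesOrthogonal x v) {t d e : ℝ} (ht : 0 ≤ t)
    (hd : ‖x + t • v‖ = 1 + d) (hte : t / (1 + d) ≤ e) (he : e < 2) :
    convexityModulus X e ≤ d / (1 + d) + (e - t / (1 + d)) / (2 - e) := by
  have hd0 : 0 < 1 + d := by linarith [hxv t]
  have hr : 0 ≤ (1 + d)⁻¹ := by positivity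
  have ha : ‖(1 + d)⁻¹ • x‖ ≤ 1 := by
    rw [norm_smul_of_nonneg hr, hx, mul_one]
    exact inv_le_one_of_one_le₀ (by linarith [hxv t])
  have hb : ‖(1 + d)⁻¹ • (x + t • v)‖ = 1 := by
    rw [norm_smul_of_nonneg hr, hd, inv_mul_cancel₀ hd0.ne']
  have hdiff : ‖(1 + d)⁻¹ • x - (1 + d)⁻¹ • (x + t • v)‖ = t / (1 + d) := by
    rw [← smul_sub, sub_add_cancel_left, smul_neg, norm_neg, ← mul_smul,
      norm_smul_of_nonneg (mul_nonneg hr ht), hv, mul_one, inv_mul_eq_div]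
  have hsum : 2 * (1 + d)⁻¹ ≤ ‖(1 + d)⁻¹ • x + (1 + d)⁻¹ • (x + t • v)‖ := by
    rw [← smul_add, norm_smul_of_nonneg hr,
      show x + (x + t • v) = (2 : ℝ) • (x + (t / 2) • v) by module,
      norm_smul_of_nonneg zero_le_two, mul_comm]
    gcongr
    linarith [hxv (t / 2)]
  have hmid : 1 - 2 * (1 + d)⁻¹ / 2 = d / (1 + d) := by field_simp; ring
  have := convexityModulus_le_add_div ha hb.le (hdiff.trans_le hte) he
  rw [hdiff] at this
  linarith

theorem convexityModulus_div_one_add_tangentialModulus_le (hdim : 2 ≤ Module.rank ℝ X) {t : ℝ}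
    (ht0 : 0 ≤ t) (ht2 : t < 2) :
    convexityModulus X (t / (1 + tangentialModulus X t)) ≤
      tangentialModulus X t / (1 + tangentialModulus X t) := by
  have := nontrivial_of_two_le_rank hdim
  have hφ : 0 < 1 + tangentialModulus X t := by linarith [tangentialModulus_nonneg (X := X) t]
  set e := t / (1 + tangentialModulus X t)
  have he : e < 2 :=
    (div_le_self ht0 (le_add_of_nonneg_right (tangentialModulus_nonneg t))).trans_lt ht2
  have key := le_at_tangentialModulus hdim (f := fun _ => convexityModulus X e)
    (g := fun d => d / (1 + d) + (e - t / (1 + d)) / (2 - e)) continuousAt_const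
    (by fun_prop (disch := exact hφ.ne')) fun x v hx hv hxv =>
      convexityModulus_le_of_birkhoffJamesOrthogonal hx hv hxv ht0 (by ring)
        (div_le_div_of_nonneg_left ht0 hφ (by linarith [tangentialModulus_le hx hv hxv t])) he
  simpa [e] using key

theorem norm_add_smul_le_two_sub {x v : X} (hx : ‖x‖ = 1) {β ρ s : ℝ} (hβ1 : β ≤ 1)
    (hρ : 0 < ρ) (h : ‖β • x + ρ • v‖ ≤ 1) (hs0 : 0 ≤ s) (hsρ : s ≤ ρ) :
    ‖x + s • v‖ ≤ 2 - β := by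
  set c := s / ρ
  have hc0 : 0 ≤ c := div_nonneg hs0 hρ.le
  have hc1 : c ≤ 1 := div_le_one_of_le₀ hsρ hρ.le
  have hcβ : 0 ≤ 1 - c * β := by nlinarith
  have hcomb : x + s • v = (1 - c * β) • x + c • (β • x + ρ • v) := by
    rw [← div_mul_cancel₀ s hρ.ne']; module
  calc ‖x + s • v‖ ≤ (1 - c * β) * ‖x‖ + c * ‖β • x + ρ • v‖ := by
        rw [hcomb, ← norm_smul_of_nonneg hcβ, ← norm_smul_of_nonneg hc0]; exact norm_add_le _ _
    _ ≤ 2 - β := by rw [hx]; nlinarith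

theorem tangentialModulus_le_one_sub_norm {m u : X} (hmu : ‖m + u‖ ≤ 1) (hmu' : ‖m - u‖ ≤ 1)
    {s : ℝ} (hs : 0 < s) (hsu : s ≤ ‖u‖ - (1 - ‖m‖)) : tangentialModulus X s ≤ 1 - ‖m‖ := by
  have hm : m ≠ 0 := by
    rintro rfl
    simp only [zero_add, norm_zero] at hmu hsu
    linarith
  obtain ⟨F, hF, hFm⟩ := exists_dual_vector ℝ m (norm_ne_zero_iff.2 hm)
  replace hFm : F m = ‖m‖ := hFm
  wlog hFu : 0 ≤ F u generalizing u
  · exact this (u := -u) (by rwa [← sub_eq_add_neg]) (by rwa [sub_neg_eq_add])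
      (by rwa [norm_neg]) (by rw [map_neg]; linarith)
  have hFle : ∀ z, F z ≤ ‖z‖ := fun z => by
    simpa [hF] using (le_abs_self (F z)).trans (F.le_opNorm z)
  set f := F u
  have hf : ‖m‖ + f ≤ 1 := by
    have := hFle (m + u)
    rw [map_add, hFm] at this
    linarith
  set x := ‖m‖⁻¹ • m
  have hx : ‖x‖ = 1 := norm_smul_inv_norm hm
  have hFx : F x = 1 := by simp [x, hFm, norm_ne_zero_iff.2 hm]
  set w := u - f • x
  have hFw : F w = 0 := by simp [w, hFx, f]
  have hsw : s ≤ ‖w‖ := by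
    have := norm_sub_norm_le u (f • x)
    rw [norm_smul_of_nonneg hFu, hx, mul_one] at this
    linarith
  have hw : w ≠ 0 := norm_pos_iff.1 (hs.trans_le hsw)
  have hv : ‖‖w‖⁻¹ • w‖ = 1 := norm_smul_inv_norm hw
  have hxv : BirkhoffJamesOrthogonal x (‖w‖⁻¹ • w) :=
    .of_dual hF.le (by rw [hFx, hx]) (by simp [hFw])
  have hline : (‖m‖ + f) • x + ‖w‖ • (‖w‖⁻¹ • w) = m + u := by
    rw [smul_inv_smul₀ (norm_ne_zero_iff.2 hw), add_smul, smul_inv_smul₀ (norm_ne_zero_iff.2 hm)]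
    simp only [w]; abel
  have := norm_add_smul_le_two_sub hx hf (hs.trans_le hsw) (hline ▸ hmu) hs.le hsw
  linarith [tangentialModulus_le hx hv hxv s]

theorem tangentialModulus_half_sub_convexityModulus_le (hdim : 2 ≤ Module.rank ℝ X) {t : ℝ}
    (ht0 : 0 ≤ t) (ht2 : t ≤ 2) :
    tangentialModulus X (t / 2 - convexityModulus X t) ≤ convexityModulus X t := by
  have := nontrivial_of_two_le_rank hdim
  refine le_at_convexityModulus ht2 (f := fun d => tangentialModulus X (t / 2 - d)) (g := id)
    ((lipschitzWith_tangentialModulus hdim).continuous.continuousAt.comp (by fun_prop))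
    continuousAt_id fun a b ha hb hab => ?_
  set d := 1 - ‖a + b‖ / 2
  change tangentialModulus X (t / 2 - d) ≤ d
  rcases le_or_gt (t / 2 - d) 0 with h | h
  · calc tangentialModulus X (t / 2 - d) ≤ |t / 2 - d| := tangentialModulus_le_abs hdim _
      _ ≤ d := by rw [abs_of_nonpos h]; linarith
  have hm : ‖(2 : ℝ)⁻¹ • (a + b)‖ = ‖a + b‖ / 2 := by
    rw [norm_smul_of_nonneg (by norm_num)]; ring
  have hu : ‖(2 : ℝ)⁻¹ • (a - b)‖ = ‖a - b‖ / 2 := by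
    rw [norm_smul_of_nonneg (by norm_num)]; ring
  calc tangentialModulus X (t / 2 - d) ≤ tangentialModulus X (‖a - b‖ / 2 - d) :=
        monotoneOn_tangentialModulus hdim h.le (by simp only [mem_Ici]; linarith) (by linarith)
    _ ≤ d := by
        convert tangentialModulus_le_one_sub_norm (m := (2 : ℝ)⁻¹ • (a + b))
          (u := (2 : ℝ)⁻¹ • (a - b)) (s := ‖a - b‖ / 2 - d) ?_ ?_ (by linarith) ?_ using 2
        · rw [hm]
        · rwa [show (2 : ℝ)⁻¹ • (a + b) + (2 : ℝ)⁻¹ • (a - b) = a by module]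
        · rwa [show (2 : ℝ)⁻¹ • (a + b) - (2 : ℝ)⁻¹ • (a - b) = b by module]
        · rw [hm, hu]

theorem tangentialModulus_pos_iff_convexityModulus_pos (hdim : 2 ≤ Module.rank ℝ X) :
    (∀ t : ℝ, 0 < t → 0 < tangentialModulus X t) ↔
      ∀ ε : ℝ, 0 < ε → ε < 2 → 0 < convexityModulus X ε := by
  constructor
  · intro hφ ε hε0 hε2
    refine (convexityModulus_nonneg ε).lt_of_ne' fun hδ => ?_
    have := tangentialModulus_half_sub_convexityModulus_le hdim hε0.le hε2.le
    rw [hδ, sub_zero] at this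
    linarith [hφ (ε / 2) (by positivity)]
  · intro hδ
    have hsmall : ∀ t : ℝ, 0 < t → t < 2 → 0 < tangentialModulus X t := fun t ht ht2 =>
      (tangentialModulus_nonneg t).lt_of_ne' fun hφ => by
        have := convexityModulus_div_one_add_tangentialModulus_le hdim ht.le ht2
        rw [hφ, add_zero, div_one, zero_div] at this
        linarith [hδ t ht ht2, this]
    intro t ht
    rcases lt_or_ge t 2 with ht2 | ht2
    · exact hsmall t ht ht2
    · exact (hsmall 1 one_pos one_lt_two).trans_le
        (monotoneOn_tangentialModulus hdim (mem_Ici.2 zero_le_one) (mem_Ici.2 ht.le) (by linarith))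

end Estimates

/-- Properties of the tangential modulus of convexity `φ_X` of a
normed space of dimension at least `2`: (a) `φ_X(0) = 0` and `φ_X` is `1`-Lipschitz on
`[0, ∞)`; (b) `φ_X(λ t) ≤ λ φ_X(t)` for `λ ∈ (0,1)`, `t ≥ 0`, and in particular `φ_X` is
non-decreasing; (c) `δ_X(t/(1 + φ_X(t))) ≤ φ_X(t)/(1 + φ_X(t))` for `t ∈ [0,2)`;
(d) if `t ∈ [0,2)` and `t/2 - 2 δ_X(t) ≥ 0` then `φ_X(t/2 - 2 δ_X(t)) ≤ δ_X(t)`;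
(e) `φ_X` is positive on `(0,∞)` iff `δ_X` is positive on `(0,2)`. -/
theorem tangentialModulus_properties {X : Type u} [NormedAddCommGroup X]
    [NormedSpace ℝ X] (hdim : 2 ≤ Module.rank ℝ X) :
    (tangentialModulus X 0 = 0 ∧
      ∀ s t : ℝ, 0 ≤ s → 0 ≤ t →
        |tangentialModulus X s - tangentialModulus X t| ≤ |s - t|) ∧
    (∀ lam t : ℝ, 0 < lam → lam < 1 → 0 ≤ t →
      tangentialModulus X (lam * t) ≤ lam * tangentialModulus X t) ∧
    (∀ s t : ℝ, 0 ≤ s → s ≤ t → tangentialModulus X s ≤ tangentialModulus X t) ∧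
    (∀ t : ℝ, 0 ≤ t → t < 2 →
      convexityModulus X (t / (1 + tangentialModulus X t)) ≤
        tangentialModulus X t / (1 + tangentialModulus X t)) ∧
    (∀ t : ℝ, 0 ≤ t → t < 2 → 0 ≤ t / 2 - 2 * convexityModulus X t →
      tangentialModulus X (t / 2 - 2 * convexityModulus X t) ≤ convexityModulus X t) ∧
    ((∀ t : ℝ, 0 < t → 0 < tangentialModulus X t) ↔
      ∀ ε : ℝ, 0 < ε → ε < 2 → 0 < convexityModulus X ε) := by
  refine ⟨⟨tangentialModulus_zero, fun s t _ _ => ?_⟩,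
    fun lam t h0 h1 _ => tangentialModulus_mul_le hdim h0.le h1.le t,
    fun s t hs hst => monotoneOn_tangentialModulus hdim hs (hs.trans hst) hst,
    fun t ht0 ht2 => convexityModulus_div_one_add_tangentialModulus_le hdim ht0 ht2,
    fun t ht0 ht2 hs => ?_, tangentialModulus_pos_iff_convexityModulus_pos hdim⟩
  · simpa [Real.dist_eq] using (lipschitzWith_tangentialModulus hdim).dist_le_mul s t
  · have hδ := convexityModulus_nonneg (X := X) t
    calc tangentialModulus X (t / 2 - 2 * convexityModulus X t)
        ≤ tangentialModulus X (t / 2 - convexityModulus X t) :=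
          monotoneOn_tangentialModulus hdim hs (by simp only [mem_Ici]; linarith) (by linarith)
      _ ≤ convexityModulus X t :=
          tangentialModulus_half_sub_convexityModulus_le hdim ht0 ht2.le
end
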